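/- arXiv:1507.01732 — 7 statements merged into one kernel-verified Lean document; each statement's English description precedes it below -/
import Mathlib

section
/- For every odd integer k > 25, C(k-1, (k-1)/2)·2^(-k) + 1/(2k) ≤ 1/(2√k). -/
/-!
Write `k = 2n + 1`, so that `C(k-1, (k-1)/2) / 2^k` is half of `a n = C(2n, n) / 4^n`. Since
`1/(2√x) = ((√x - 1)/x)/2 + 1/(2x)`, the claim is `a n ≤ (√x - 1)/x` with `x = 2n + 1`. This holds
numerically at `n = 13` and propagates by induction: `a (n+1) = a n · x/(x+1)`, and
`(√x - 1)/(x + 1) ≤ (√(x+2) - 1)/(x + 2)`.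
-/

open Real

lemma sqrt_sub_one_div_add_one_le {x : ℝ} (hx : 0 ≤ x) :
    (√x - 1) / (x + 1) ≤ (√(x + 2) - 1) / (x + 2) := by
  have hcross : (x + 2) * √x ≤ (x + 1) * √(x + 2) := by
    have hl : (x + 2) * √x = √(x * (x + 2) ^ 2) := by
      rw [sqrt_mul hx, sqrt_sq (by linarith), mul_comm]
    have hr : (x + 1) * √(x + 2) = √((x + 1) ^ 2 * (x + 2)) := by
      rw [sqrt_mul (by positivity), sqrt_sq (by linarith)]
    rw [hl, hr]
    exact sqrt_le_sqrt (by nlinarith)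
  rw [div_le_div_iff₀ (by linarith) (by linarith)]
  linarith

lemma Nat.centralBinom_succ_div_four_pow (n : ℕ) :
    ((n + 1).centralBinom : ℝ) / 4 ^ (n + 1)
      = n.centralBinom / 4 ^ n * ((2 * n + 1) / (2 * n + 2)) := by
  have hrec : ((n : ℝ) + 1) * (n + 1).centralBinom = 2 * (2 * n + 1) * n.centralBinom := by
    exact_mod_cast n.succ_mul_centralBinom_succ
  have hcb : ((n + 1).centralBinom : ℝ) = 2 * (2 * n + 1) * n.centralBinom / (n + 1) := by
    rw [eq_div_iff (by positivity), mul_comm, hrec]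
  rw [hcb]
  field_simp
  ring

lemma Nat.centralBinom_div_four_pow_le {n : ℕ} (hn : 13 ≤ n) :
    (n.centralBinom : ℝ) / 4 ^ n ≤ (√(2 * n + 1) - 1) / (2 * n + 1) := by
  induction n, hn using Nat.le_induction with
  | base =>
    -- tight: `C(26, 13) / 4^13 ≈ 0.154981` against `(√27 - 1)/27 ≈ 0.154995`
    have h27 : (5.185 : ℝ) ≤ √27 := le_sqrt_of_sq_le (by norm_num)
    rw [show Nat.centralBinom 13 = 10400600 by decide]
    norm_num
    linarith
  | succ n hn ih =>
    set x : ℝ := 2 * n + 1 with hx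
    have hx0 : 0 < x := by positivity
    calc ((n + 1).centralBinom : ℝ) / 4 ^ (n + 1)
        = n.centralBinom / 4 ^ n * (x / (x + 1)) := by
          rw [Nat.centralBinom_succ_div_four_pow, hx]; ring
      _ ≤ (√x - 1) / x * (x / (x + 1)) := by gcongr
      _ = (√x - 1) / (x + 1) := by field_simp
      _ ≤ (√(x + 2) - 1) / (x + 2) := sqrt_sub_one_div_add_one_le hx0.le
      _ = (√(2 * ↑(n + 1) + 1) - 1) / (2 * ↑(n + 1) + 1) := by rw [hx]; push_cast; ring_nf

theorem central_binom_odd_bound (k : ℕ) (hodd : Odd k) (hk : 25 < k) :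
    ((k - 1).choose ((k - 1) / 2) : ℝ) / 2 ^ k + 1 / (2 * k) ≤ 1 / (2 * Real.sqrt k) := by
  obtain ⟨n, rfl⟩ := hodd
  have hchoose : (2 * n + 1 - 1).choose ((2 * n + 1 - 1) / 2) = n.centralBinom := by
    rw [Nat.add_sub_cancel, Nat.mul_div_cancel_left n two_pos, Nat.centralBinom]
  have hpow : (2 : ℝ) ^ (2 * n + 1) = 4 ^ n * 2 := by
    rw [pow_succ, pow_mul]; norm_num
  have hbound := Nat.centralBinom_div_four_pow_le (n := n) (by omega)
  rw [hchoose, hpow]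
  push_cast
  set x : ℝ := 2 * n + 1
  have hx : 0 < x := by positivity
  have hsplit : 1 / (2 * √x) = (√x - 1) / x / 2 + 1 / (2 * x) := by
    field_simp
    rw [sub_add_cancel, mul_self_sqrt hx.le]
  rw [hsplit, ← div_div]
  linarith
end

section
/- For any even positive integer k, the sum ∑_{r=1}^{k} C(k,r)·2^(-k)·min(r, k/2)/k equals (1/2)·(1 - C(k, k/2)·2^(-(k+1))). -/
/-!
Write `k = 2m` and `min r m = r - (r - m)` (truncated). The first part contributes
`∑ r C(2m, r) = m 2^{2m}`. By the symmetry `C(2m, r) = C(2m, 2m - r)`, the second part equals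
`∑_{r < m} (m - r) C(2m, r)`, and twice this telescopes to `m C(2m, m)` because
`(n - 2r) C(n, r) = (r + 1) C(n, r + 1) - r C(n, r)`.
-/

open Finset

theorem Nat.cast_sub_mul_choose (n j : ℕ) :
    ((n : ℤ) - j) * n.choose j = (j + 1) * n.choose (j + 1) := by
  rcases le_or_gt j n with hjn | hnj
  · have h := Nat.choose_succ_right_eq n j
    zify [hjn] at h
    linarith
  · simp [Nat.choose_eq_zero_of_lt hnj, Nat.choose_eq_zero_of_lt (Nat.lt_succ_of_lt hnj)]

theorem Nat.sum_range_sub_two_mul_mul_choose (n j : ℕ) :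
    ∑ r ∈ range j, ((n : ℤ) - 2 * r) * n.choose r = j * n.choose j := by
  induction j with
  | zero => simp
  | succ j ih =>
    rw [sum_range_succ, ih, Nat.cast_succ, ← Nat.cast_sub_mul_choose]
    ring

theorem Nat.two_mul_sum_tsub_mul_choose (m : ℕ) :
    2 * ∑ r ∈ range (2 * m + 1), (r - m) * (2 * m).choose r = m * (2 * m).choose m := by
  have reflect : ∑ r ∈ range (2 * m + 1), (r - m) * (2 * m).choose r
      = ∑ r ∈ range (2 * m + 1), (m - r) * (2 * m).choose r := by
    rw [← sum_flip]
    refine sum_congr rfl fun r hr => ?_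
    rw [Nat.choose_symm (mem_range_succ_iff.mp hr)]
    congr 1
    omega
  have restrict : ∑ r ∈ range (2 * m + 1), (m - r) * (2 * m).choose r
      = ∑ r ∈ range m, (m - r) * (2 * m).choose r := by
    rw [show 2 * m + 1 = m + (m + 1) by ring, sum_range_add, add_eq_left]
    exact sum_eq_zero fun r _ => by simp
  rw [reflect, restrict]
  zify
  rw [mul_sum, ← Nat.sum_range_sub_two_mul_mul_choose (2 * m) m]
  refine sum_congr rfl fun r hr => ?_
  rw [Nat.cast_sub (mem_range.mp hr).le]
  push_cast
  ring

theorem Nat.two_mul_sum_min_mul_choose (m : ℕ) :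
    2 * ∑ r ∈ range (2 * m + 1), min r m * (2 * m).choose r + m * (2 * m).choose m
      = 2 * m * 2 ^ (2 * m) := by
  have split : ∑ r ∈ range (2 * m + 1), min r m * (2 * m).choose r
      + ∑ r ∈ range (2 * m + 1), (r - m) * (2 * m).choose r = m * 2 ^ (2 * m) := by
    rcases eq_or_ne m 0 with rfl | hm
    · simp
    rw [← sum_add_distrib]
    calc ∑ r ∈ range (2 * m + 1), (min r m * (2 * m).choose r + (r - m) * (2 * m).choose r)
        = ∑ r ∈ range (2 * m + 1), r * (2 * m).choose r :=
          sum_congr rfl fun r _ => by rw [← add_mul]; congr 1; omega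
      _ = m * 2 ^ (2 * m) := by
          rw [Nat.sum_range_mul_choose, mul_comm 2 m, mul_assoc, mul_pow_sub_one (by omega)]
  linarith [Nat.two_mul_sum_tsub_mul_choose m]

theorem binom_min_sum_even (k : ℕ) (hk : 0 < k) (heven : Even k) :
    ∑ r ∈ Finset.Icc 1 k,
        (k.choose r : ℝ) / 2 ^ k * ((min r (k / 2) : ℕ) : ℝ) / k
      = (1 / 2) * (1 - (k.choose (k / 2) : ℝ) / 2 ^ (k + 1)) := by
  obtain ⟨m, rfl⟩ := heven
  rw [← two_mul] at hk ⊢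
  rw [Nat.mul_div_cancel_left m two_pos]
  have key : ((2 * ∑ r ∈ range (2 * m + 1), min r m * (2 * m).choose r
      + m * (2 * m).choose m : ℕ) : ℝ) = (2 * m * 2 ^ (2 * m) : ℕ) := by
    rw [Nat.two_mul_sum_min_mul_choose m]
  have drop_zero : ∑ r ∈ Icc 1 (2 * m),
        ((2 * m).choose r : ℝ) / 2 ^ (2 * m) * ((min r m : ℕ) : ℝ) / ((2 * m : ℕ) : ℝ)
      = (∑ r ∈ range (2 * m + 1), (min r m * (2 * m).choose r : ℕ))
        / (2 ^ (2 * m) * (2 * m : ℕ)) := by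
    rw [range_eq_Ico, sum_eq_sum_Ico_succ_bot (by omega), Ico_add_one_right_eq_Icc, Nat.cast_add,
      Nat.cast_sum, add_div, sum_div]
    simp only [zero_le, min_eq_left, zero_mul, Nat.cast_zero, zero_div, zero_add]
    refine sum_congr rfl fun r _ => ?_
    push_cast
    ring
  rw [drop_zero]
  push_cast at key ⊢
  have hm : (m : ℝ) ≠ 0 := by exact_mod_cast (by omega : m ≠ 0)
  field_simp
  linear_combination 2 ^ (2 * m) * key
end

section
/- For positive integer n, real p with 0 < p ≤ 1, and μ = np assumed to be a (nonnegative) integer, E[min(Bin(n,p), μ)] = μ·(1 - (1-p)·P[Bin(n-1, p) = μ]). -/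
/-!
Write `b n i = C(n,i) pⁱ qⁿ⁻ⁱ` with `q = 1 - p`. Since `min i μ = μ - (μ - i)⁺` and
`∑ b n i = 1`, the left side is `μ - ∑_{i < μ} (μ - i) b n i`. Pascal's rule
`b (n+1) (i+1) = p b n i + q b n (i+1)` and `(i+1) b (n+1) (i+1) = (n+1) p b n i` give
`((n+1) p - i) b (n+1) i = (n+1) p q (b n i - b n (i-1))`, so the sum telescopes to
`μ q b (n-1) (μ-1)`. Finally `μ = n p` is a mode of `Bin(n-1, p)`:
`q b (n-1) (μ-1) = q b (n-1) μ`.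
-/

open Finset

section

variable {R : Type*} [CommRing R]

def binomialTerm (n : ℕ) (p : R) (i : ℕ) : R :=
  n.choose i * p ^ i * (1 - p) ^ (n - i)

theorem sum_binomialTerm (n : ℕ) (p : R) : ∑ i ∈ range (n + 1), binomialTerm n p i = 1 := by
  have h := (add_pow p (1 - p) n).symm
  rw [add_sub_cancel, one_pow] at h
  rw [← h]
  exact sum_congr rfl fun i _ => by unfold binomialTerm; ring

theorem binomialTerm_eq_zero_of_lt {n i : ℕ} (h : n < i) (p : R) : binomialTerm n p i = 0 := by
  simp [binomialTerm, Nat.choose_eq_zero_of_lt h]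

theorem binomialTerm_zero_right (n : ℕ) (p : R) : binomialTerm n p 0 = (1 - p) ^ n := by
  simp [binomialTerm]

theorem binomialTerm_succ_succ (n : ℕ) (p : R) (i : ℕ) :
    binomialTerm (n + 1) p (i + 1)
      = p * binomialTerm n p i + (1 - p) * binomialTerm n p (i + 1) := by
  rcases lt_or_ge n (i + 1) with h | h
  · have hin : n - i = 0 := by omega
    rw [binomialTerm_eq_zero_of_lt h, mul_zero, add_zero]
    simp only [binomialTerm, Nat.choose_succ_succ', Nat.choose_eq_zero_of_lt h,
      Nat.add_sub_add_right, hin]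
    push_cast
    ring
  · obtain ⟨d, rfl⟩ := Nat.exists_eq_add_of_le h
    simp only [binomialTerm, Nat.choose_succ_succ', Nat.cast_add,
      show i + 1 + d + 1 - (i + 1) = d + 1 by omega, show i + 1 + d - i = d + 1 by omega,
      show i + 1 + d - (i + 1) = d by omega]
    ring

theorem succ_mul_binomialTerm_succ (n : ℕ) (p : R) (i : ℕ) :
    (i + 1 : R) * binomialTerm (n + 1) p (i + 1) = (n + 1) * p * binomialTerm n p i := by
  have h := congrArg (Nat.cast (R := R)) (Nat.add_one_mul_choose_eq n i)
  simp only [binomialTerm, Nat.add_sub_add_right]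
  push_cast at h
  linear_combination -p ^ (i + 1) * (1 - p) ^ (n - i) * h

theorem succ_mul_binomialTerm_succ_right (n : ℕ) (p : R) (i : ℕ) :
    (i + 1 : R) * (1 - p) * binomialTerm n p (i + 1)
      = ((n - i : ℕ) : R) * p * binomialTerm n p i := by
  have h := congrArg (Nat.cast (R := R)) (Nat.choose_succ_right_eq n i)
  rcases lt_or_ge i n with hi | hi
  · have hpow : (1 - p) ^ (n - i) = (1 - p) ^ (n - (i + 1)) * (1 - p) := by
      rw [← pow_succ]; congr 1; omega
    simp only [binomialTerm, hpow]
    push_cast [Nat.cast_sub hi.le] at h ⊢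
    linear_combination p ^ (i + 1) * (1 - p) ^ (n - (i + 1)) * (1 - p) * h
  · simp [binomialTerm, Nat.choose_eq_zero_of_lt (Nat.lt_succ_of_le hi), Nat.sub_eq_zero_of_le hi]

theorem sum_range_mean_sub_mul_binomialTerm (n : ℕ) (p : R) (k : ℕ) :
    ∑ i ∈ range (k + 1), ((n + 1) * p - i) * binomialTerm (n + 1) p i
      = (n + 1) * p * (1 - p) * binomialTerm n p k := by
  induction k with
  | zero =>
    simp only [zero_add, sum_range_one, Nat.cast_zero, sub_zero, binomialTerm_zero_right]
    ring
  | succ k ih =>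
    rw [sum_range_succ, ih, sub_mul, Nat.cast_succ, succ_mul_binomialTerm_succ,
      binomialTerm_succ_succ]
    ring

theorem sum_range_min_mul_binomialTerm (n : ℕ) (p : R) (k : ℕ) :
    ∑ i ∈ range (n + 1), ((min i k : ℕ) : R) * binomialTerm n p i
      = k - ∑ i ∈ range k, ((k : R) - i) * binomialTerm n p i := by
  have hmin (i : ℕ) : ((min i k : ℕ) : R) = k - ((k - i : ℕ) : R) := by
    rw [eq_sub_iff_add_eq, ← Nat.cast_add]
    congr 1
    omega
  have hext : ∑ i ∈ range (n + 1), ((k - i : ℕ) : R) * binomialTerm n p i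
      = ∑ i ∈ range k, ((k - i : ℕ) : R) * binomialTerm n p i := by
    rw [sum_subset (range_subset_range.2 (Nat.le_add_right (n + 1) k)),
      sum_subset (range_subset_range.2 (Nat.le_add_left k (n + 1)))]
    · intro i _ hi
      rw [mem_range, not_lt] at hi
      simp [Nat.sub_eq_zero_of_le hi]
    · intro i _ hi
      rw [mem_range, not_lt] at hi
      rw [binomialTerm_eq_zero_of_lt hi, mul_zero]
  simp only [hmin, sub_mul]
  rw [sum_sub_distrib, ← mul_sum, sum_binomialTerm, mul_one, hext]
  congr 1
  exact sum_congr rfl fun i hi => by rw [Nat.cast_sub (mem_range.1 hi).le, sub_mul]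

end

theorem binomialTerm_succ_eq_of_succ_eq_mul {K : Type*} [Field K] [CharZero K] {n k : ℕ}
    {p : K} (hk : (k + 1 : K) = (n + 1) * p) :
    (1 - p) * binomialTerm n p (k + 1) = (1 - p) * binomialTerm n p k := by
  rcases le_or_gt k n with hkn | hkn
  · have h := succ_mul_binomialTerm_succ_right n p k
    rw [Nat.cast_sub hkn, show (n - k : K) = (n + 1) * (1 - p) by linear_combination -hk] at h
    have hk0 : (k + 1 : K) ≠ 0 := by exact_mod_cast k.succ_ne_zero
    apply mul_left_cancel₀ hk0
    linear_combination h - (1 - p) * binomialTerm n p k * hk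
  · rw [binomialTerm_eq_zero_of_lt hkn, binomialTerm_eq_zero_of_lt (by omega)]

theorem expectation_min_binomial_general (n : ℕ) (p : ℝ) (μ : ℕ) (hμ : (μ : ℝ) = n * p) :
    ∑ i ∈ Finset.range (n + 1),
        ((min i μ : ℕ) : ℝ) * (n.choose i : ℝ) * p ^ i * (1 - p) ^ (n - i)
      = (μ : ℝ) * (1 - (1 - p) * ((n - 1).choose μ : ℝ) * p ^ μ * (1 - p) ^ (n - 1 - μ)) := by
  rcases μ with _ | m
  · simp
  obtain ⟨N, rfl⟩ : ∃ N, n = N + 1 := Nat.exists_eq_add_one.2 <| Nat.pos_of_ne_zero fun hn => by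
    rw [hn, Nat.cast_zero, zero_mul] at hμ
    exact_mod_cast hμ
  push_cast at hμ
  calc ∑ i ∈ range (N + 1 + 1),
        ((min i (m + 1) : ℕ) : ℝ) * ((N + 1).choose i : ℝ) * p ^ i * (1 - p) ^ (N + 1 - i)
      = ∑ i ∈ range (N + 1 + 1), ((min i (m + 1) : ℕ) : ℝ) * binomialTerm (N + 1) p i :=
        sum_congr rfl fun i _ => by unfold binomialTerm; ring
    _ = (m + 1) - (N + 1) * p * (1 - p) * binomialTerm N p m := by
        rw [sum_range_min_mul_binomialTerm, Nat.cast_succ, ← sum_range_mean_sub_mul_binomialTerm,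
          hμ]
    _ = (m + 1) * (1 - (1 - p) * binomialTerm N p (m + 1)) := by
        rw [binomialTerm_succ_eq_of_succ_eq_mul hμ, ← hμ]; ring
    _ = _ := by unfold binomialTerm; push_cast; ring

theorem expectation_min_binomial (n : ℕ) (hn : 0 < n) (p : ℝ) (hp0 : 0 < p) (hp1 : p ≤ 1)
    (μ : ℕ) (hμ : (μ : ℝ) = n * p) :
    ∑ i ∈ Finset.range (n + 1),
        ((min i μ : ℕ) : ℝ) * (n.choose i : ℝ) * p ^ i * (1 - p) ^ (n - i)
      = (μ : ℝ) * (1 - (1 - p) * ((n - 1).choose μ : ℝ) * p ^ μ * (1 - p) ^ (n - 1 - μ)) :=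
  expectation_min_binomial_general n p μ hμ
end

section
/- For positive integer n, real p with 0 < p < 1, and μ = np a positive integer, (1-p)·P[Bin(n-1, p) = μ] ≥ (√(2π)/e²)·√(1-p)/√μ. -/
/-!
With `b = n - μ` and `p = μ / n`, the left-hand side equals `(b / n) · C(n, μ) (μ/n)^μ (b/n)^b`.
Stirling's lower bound `√(2πn) (n/e)^n ≤ n!` for the numerator of `C(n, μ)` and the upper bound
`k! ≤ e √k (k/e)^k` for the two factorials of the denominator make all powers cancel, leaving
`√(2πn) / (e² √μ √b)`.
-/

open Real Nat

theorem factorial_le_exp_one_mul_sqrt_mul_pow {n : ℕ} (hn : n ≠ 0) :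
    (n ! : ℝ) ≤ exp 1 * √n * (n / exp 1) ^ n := by
  obtain ⟨m, rfl⟩ := Nat.exists_eq_succ_of_ne_zero hn
  -- `stirlingSeq` decreases from `stirlingSeq 1 = e / √2`
  have hle : Stirling.stirlingSeq (m + 1) ≤ exp 1 / √2 :=
    Stirling.stirlingSeq_one ▸ Stirling.stirlingSeq'_antitone (Nat.zero_le m)
  rw [Stirling.stirlingSeq, div_le_iff₀ (by positivity)] at hle
  calc ((m + 1) ! : ℝ) ≤ exp 1 / √2 * (√(2 * (m + 1 : ℕ)) * ((m + 1 : ℕ) / exp 1) ^ (m + 1)) := hle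
    _ = exp 1 * √(m + 1 : ℕ) * ((m + 1 : ℕ) / exp 1) ^ (m + 1) := by
      rw [sqrt_mul zero_le_two]; field_simp

theorem sqrt_two_pi_mul_div_le_choose_mul_pow_mul_pow {a b : ℕ} (ha : a ≠ 0) (hb : b ≠ 0) :
    √(2 * π * (a + b : ℕ)) / (exp 1 ^ 2 * √a * √b) ≤
      ((a + b).choose a : ℝ) * (a / (a + b : ℕ) : ℝ) ^ a * (b / (a + b : ℕ) : ℝ) ^ b := by
  have hN : ((a + b : ℕ) : ℝ) ≠ 0 := by positivity
  have haR : (a : ℝ) ≠ 0 := by positivity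
  have hbR : (b : ℝ) ≠ 0 := by positivity
  rw [Nat.cast_add_choose]
  calc √(2 * π * (a + b : ℕ)) / (exp 1 ^ 2 * √a * √b)
      = √(2 * π * (a + b : ℕ)) * ((a + b : ℕ) / exp 1) ^ (a + b) /
          ((exp 1 * √a * (a / exp 1) ^ a) * (exp 1 * √b * (b / exp 1) ^ b)) *
          (a / (a + b : ℕ) : ℝ) ^ a * (b / (a + b : ℕ) : ℝ) ^ b := by
        simp only [div_pow, pow_add]
        field_simp
    _ ≤ (a + b)! / (a ! * b !) * (a / (a + b : ℕ) : ℝ) ^ a * (b / (a + b : ℕ) : ℝ) ^ b := by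
      gcongr
      · exact Stirling.le_factorial_stirling _
      · exact factorial_le_exp_one_mul_sqrt_mul_pow ha
      · exact factorial_le_exp_one_mul_sqrt_mul_pow hb

theorem one_sub_mul_choose_pred_mul_pow_mul_pow (p : ℝ) {n k : ℕ} (hkn : k < n) :
    (1 - p) * (((n - 1).choose k : ℝ) * p ^ k * (1 - p) ^ (n - 1 - k)) =
      (n - k : ℕ) / n * (n.choose k * p ^ k * (1 - p) ^ (n - k)) := by
  obtain ⟨m, rfl⟩ := Nat.exists_eq_add_one_of_ne_zero (Nat.ne_zero_of_lt hkn)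
  have h := Nat.choose_mul_succ_eq m k
  have hC : (m.choose k : ℝ) = (m + 1 - k : ℕ) / (m + 1 : ℕ) * (m + 1).choose k := by
    rw [div_mul_eq_mul_div, eq_div_iff (by positivity)]
    exact_mod_cast h.trans (mul_comm _ _)
  rw [Nat.add_sub_cancel, hC, show m + 1 - k = m - k + 1 by omega]
  ring

theorem binomial_point_mass_lower_general (n : ℕ) (hn : 0 < n) (p : ℝ) (hp1 : p < 1)
    (μ : ℕ) (hμpos : 0 < μ) (hμ : (μ : ℝ) = n * p) :
    (1 - p) * (((n - 1).choose μ : ℝ) * p ^ μ * (1 - p) ^ (n - 1 - μ)) ≥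
      (Real.sqrt (2 * π) / (Real.exp 1) ^ 2) * Real.sqrt (1 - p) / Real.sqrt μ := by
  have hnR : (0 : ℝ) < n := by exact_mod_cast hn
  have hμn : μ < n := by
    have : (μ : ℝ) < n := hμ ▸ mul_lt_of_lt_one_right hnR hp1
    exact_mod_cast this
  have key := sqrt_two_pi_mul_div_le_choose_mul_pow_mul_pow hμpos.ne' (Nat.sub_ne_zero_of_lt hμn)
  rw [Nat.add_sub_cancel' hμn.le] at key
  have hp : p = μ / n := by rw [hμ]; field_simp
  have hq : 1 - p = (n - μ : ℕ) / n := by rw [Nat.cast_sub hμn.le, hp]; field_simp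
  rw [ge_iff_le, one_sub_mul_choose_pred_mul_pow_mul_pow p hμn, hq, hp]
  calc √(2 * π) / exp 1 ^ 2 * √((n - μ : ℕ) / n) / √μ
      = (n - μ : ℕ) / n * (√(2 * π * n) / (exp 1 ^ 2 * √μ * √(n - μ : ℕ))) := by
        have hbR : (0 : ℝ) < (n - μ : ℕ) := by exact_mod_cast Nat.sub_pos_of_lt hμn
        have hμR : (0 : ℝ) < μ := by exact_mod_cast hμpos
        rw [sqrt_mul (x := 2 * π) (by positivity), sqrt_div' _ hnR.le]
        field_simp
        rw [sq_sqrt hnR.le, sq_sqrt (by positivity), mul_comm]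
    _ ≤ _ := by gcongr

theorem binomial_point_mass_lower (n : ℕ) (hn : 0 < n) (p : ℝ) (hp0 : 0 < p) (hp1 : p < 1)
    (μ : ℕ) (hμpos : 0 < μ) (hμ : (μ : ℝ) = n * p) :
    (1 - p) * (((n - 1).choose μ : ℝ) * p ^ μ * (1 - p) ^ (n - 1 - μ)) ≥
      (Real.sqrt (2 * π) / (Real.exp 1) ^ 2) * Real.sqrt (1 - p) / Real.sqrt μ :=
  binomial_point_mass_lower_general n hn p hp1 μ hμpos hμ
end

section
/- For positive integer n, real p with 0 < p < 1, and μ = np a positive integer, (1-p)·P[Bin(n-1, p) = μ] ≤ (e/(2π))·√(1-p)/√μ. -/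
/-!
The two Stirling bounds `√(2πm) (m/e)^m ≤ m! ≤ e √m (m/e)^m`, valid for every `m ≥ 1` (the upper
one because the Stirling sequence decreases from its value `e/√2` at `1`), give
`C(k+l, k) k^k l^l / (k+l)^(k+l) ≤ (e/2π) √((k+l)/(kl))`. With `p = k/(k+l)` the left side is the
`Bin(k+l, p)` point mass at its mean `k`, and the right side is `(e/2π)/√(k(1-p))`. When `np = μ`,
the `Bin(n-1, p)` and `Bin(n, p)` point masses at `μ` coincide, so the factor `1 - p` turns this
into `(e/2π) √(1-p)/√μ`.
-/

open Real Nat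

namespace Stirling

lemma stirlingSeq_le_exp_one_div_sqrt_two {n : ℕ} (hn : n ≠ 0) : stirlingSeq n ≤ exp 1 / √2 := by
  obtain ⟨m, rfl⟩ := Nat.exists_eq_succ_of_ne_zero hn
  simpa [stirlingSeq_one] using stirlingSeq'_antitone (Nat.zero_le m)

theorem factorial_le_stirling {n : ℕ} (hn : n ≠ 0) :
    (n ! : ℝ) ≤ exp 1 * √n * (n / exp 1) ^ n := by
  have h := stirlingSeq_le_exp_one_div_sqrt_two hn
  rw [stirlingSeq, div_le_div_iff₀ (by positivity) (by positivity),
    sqrt_mul zero_le_two] at h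
  have : (0 : ℝ) < √2 := by positivity
  nlinarith

end Stirling

open Stirling in
theorem add_choose_mul_pow_mul_pow_le (k l : ℕ) :
    2 * π * √(k * l) * ((k + l).choose k * k ^ k * l ^ l) ≤
      exp 1 * √(k + l) * (k + l) ^ (k + l) := by
  obtain rfl | hk := eq_or_ne k 0
  · rw [Nat.cast_zero, zero_mul, Real.sqrt_zero, mul_zero, zero_mul]
    positivity
  have hfac : ((k + l).choose k : ℝ) * k ! * l ! = (k + l)! := by
    have h := Nat.choose_mul_factorial_mul_factorial (Nat.le_add_right k l)
    rw [Nat.add_sub_cancel_left] at h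
    exact_mod_cast h
  have hsqrt : √(2 * π * k) * √(2 * π * l) = 2 * π * √(k * l) := by
    rw [← sqrt_mul (by positivity), show 2 * π * k * (2 * π * l) = (2 * π) ^ 2 * (k * l) by ring,
      sqrt_mul (by positivity), sqrt_sq (by positivity)]
  rw [← div_le_div_iff_of_pos_right (pow_pos (exp_pos 1) (k + l))]
  calc 2 * π * √(k * l) * ((k + l).choose k * k ^ k * l ^ l) / exp 1 ^ (k + l)
      = (k + l).choose k * ((√(2 * π * k) * (k / exp 1) ^ k) *
          (√(2 * π * l) * (l / exp 1) ^ l)) := by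
        rw [← hsqrt, div_pow, div_pow, pow_add]
        field_simp
    _ ≤ (k + l).choose k * (k ! * l !) := by
        gcongr <;> exact le_factorial_stirling _
    _ = (k + l)! := by rw [← hfac]; ring
    _ ≤ exp 1 * √(k + l) * ((k + l) / exp 1) ^ (k + l) := by
        exact_mod_cast factorial_le_stirling (n := k + l) (by omega)
    _ = exp 1 * √(k + l) * (k + l) ^ (k + l) / exp 1 ^ (k + l) := by
        rw [div_pow, mul_div_assoc]

theorem add_choose_mul_pow_mul_one_sub_pow_le {k l : ℕ} (hk : k ≠ 0) (hl : l ≠ 0) {p : ℝ}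
    (hp : p * (k + l) = k) :
    (k + l).choose k * p ^ k * (1 - p) ^ l ≤ exp 1 / (2 * π) / √(k * (1 - p)) := by
  have hn : (0 : ℝ) < k + l := by positivity
  have hp' : p = k / (k + l) := (eq_div_iff hn.ne').mpr hp
  have hq : 1 - p = l / (k + l) := by rw [hp']; field_simp; ring
  have hkq : √(k * (1 - p)) = √(k * l) / √(k + l) := by
    rw [hq, ← mul_div_assoc, sqrt_div' _ hn.le]
  have h := add_choose_mul_pow_mul_pow_le k l
  rw [hkq, hq, hp', div_pow, div_pow]
  field_simp
  rw [pow_add] at h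
  linarith

theorem add_succ_choose_mul_pow_mul_one_sub_pow_succ {k l : ℕ} {p : ℝ}
    (hp : p * (k + (l + 1)) = k) :
    ((k + (l + 1)).choose k : ℝ) * p ^ k * (1 - p) ^ (l + 1) =
      (k + l).choose k * p ^ k * (1 - p) ^ l := by
  have h : ((k + l).choose k : ℝ) * (k + (l + 1)) = (k + (l + 1)).choose k * (l + 1) := by
    have h := Nat.choose_mul_succ_eq (k + l) k
    rw [show k + l + 1 - k = l + 1 by omega] at h
    exact_mod_cast h
  have hq : (1 - p) * (k + (l + 1)) = l + 1 := by linarith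
  have hchoose : ((k + (l + 1)).choose k : ℝ) * (1 - p) = (k + l).choose k := by
    refine mul_right_cancel₀ (b := (k + (l + 1) : ℝ)) (by positivity) ?_
    rw [h, mul_assoc, hq]
  rw [← hchoose]
  ring

theorem binomial_point_mass_upper_general (n : ℕ) (p : ℝ) (hp1 : p < 1)
    (μ : ℕ) (hμpos : 0 < μ) (hμ : (μ : ℝ) = n * p) :
    (1 - p) * (((n - 1).choose μ : ℝ) * p ^ μ * (1 - p) ^ (n - 1 - μ)) ≤
      (Real.exp 1 / (2 * π)) * Real.sqrt (1 - p) / Real.sqrt μ := by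
  have hq : 0 < 1 - p := by linarith
  have hμn : μ < n := by
    have hn : (0 : ℝ) < n := by
      rcases n.eq_zero_or_pos with rfl | hn
      · simp at hμ; omega
      · exact_mod_cast hn
    exact_mod_cast (show (μ : ℝ) < n by nlinarith)
  obtain ⟨m, rfl⟩ := Nat.exists_eq_add_of_lt hμn
  have hp : p * (μ + (m + 1 : ℕ)) = μ := by push_cast at hμ ⊢; linarith
  rw [show μ + m + 1 - 1 = μ + m by omega, show μ + m - μ = m by omega,
    ← add_succ_choose_mul_pow_mul_one_sub_pow_succ (by exact_mod_cast hp)]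
  calc (1 - p) * ((μ + (m + 1)).choose μ * p ^ μ * (1 - p) ^ (m + 1))
      ≤ (1 - p) * (exp 1 / (2 * π) / √(μ * (1 - p))) := by
        gcongr
        exact_mod_cast add_choose_mul_pow_mul_one_sub_pow_le hμpos.ne' m.succ_ne_zero hp
    _ = exp 1 / (2 * π) * √(1 - p) / √μ := by
        rw [sqrt_mul (by positivity)]
        nth_rw 1 [← mul_self_sqrt hq.le]
        field_simp

theorem binomial_point_mass_upper (n : ℕ) (hn : 0 < n) (p : ℝ) (hp0 : 0 < p) (hp1 : p < 1)
    (μ : ℕ) (hμpos : 0 < μ) (hμ : (μ : ℝ) = n * p) :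
    (1 - p) * (((n - 1).choose μ : ℝ) * p ^ μ * (1 - p) ^ (n - 1 - μ)) ≤
      (Real.exp 1 / (2 * π)) * Real.sqrt (1 - p) / Real.sqrt μ :=
  binomial_point_mass_upper_general n p hp1 μ hμpos hμ
end

section
/- For any real γ with 0 < γ < 1/e, and with β(γ) = 1 + 2/(ln(1/γ) - 1), for every positive integer n: n·ln(n)/(n + 1/γ)² ≤ (β(γ)/4)·γ·ln(1/γ) + (β(γ)·ln(β(γ))/4)·γ. -/
/-!
Write `a = 1/γ`, `L = log a` and `M = log (β a) = L + log β`; the right-hand side is `β M / (4a)`.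
Bounding `log x` by its tangent line at `x₀ = β a` gives `x log x ≤ x² / (β a) + (M - 1) x`, and
`β M (x + a)² / (4a)` minus this quadratic is a quadratic in `x` whose discriminant is a positive
multiple of `1 - (β - 1) M (M - 1)`. The choice of `β` makes `(β - 1)(L - 1) = 2`, so this is
negative because `M ≥ L > 1`.
-/

open Real

theorem quadratic_nonneg_of_discrim_nonpos {R : Type*} [CommRing R] [LinearOrder R]
    [IsStrictOrderedRing R] {a b c : R} (hc : 0 < c) (h : discrim a b c ≤ 0) (x : R) :
    0 ≤ a * (x * x) + b * x + c := by
  have key : 4 * c * (a * (x * x) + b * x + c) = (2 * c + b * x) ^ 2 - discrim a b c * (x * x) := by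
    rw [discrim]; ring
  have : 0 ≤ 4 * c * (a * (x * x) + b * x + c) := by
    rw [key]; nlinarith [sq_nonneg (2 * c + b * x), mul_self_nonneg x]
  exact nonneg_of_mul_nonneg_right (by rwa [mul_comm] at this) (by positivity)

theorem Real.mul_log_le_mul_tangent {x y : ℝ} (hx : 0 ≤ x) (hy : 0 < y) :
    x * log x ≤ x * (log y + x / y - 1) := by
  rcases hx.eq_or_lt with rfl | hx
  · simp
  have := log_le_sub_one_of_pos (div_pos hx hy)
  rw [log_div hx.ne' hy.ne'] at this
  exact mul_le_mul_of_nonneg_left (by linarith) hx.le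

theorem Real.mul_log_le_of_discrim {a β x : ℝ} (ha : 0 < a) (hβ : 0 < β) (hx : 0 ≤ x)
    (hM : 0 < log (β * a)) (hdisc : 1 ≤ (β - 1) * log (β * a) * (log (β * a) - 1)) :
    x * log x ≤ β * log (β * a) / (4 * a) * (x + a) ^ 2 := by
  set M := log (β * a)
  have hquad : 0 ≤ (β ^ 2 * M - 4) * (x * x) + 2 * a * β * (β * M - 2 * M + 2) * x
      + a ^ 2 * β ^ 2 * M := by
    refine quadratic_nonneg_of_discrim_nonpos (by positivity) ?_ x
    have : discrim (β ^ 2 * M - 4) (2 * a * β * (β * M - 2 * M + 2)) (a ^ 2 * β ^ 2 * M) =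
        16 * a ^ 2 * β ^ 2 * (1 - (β - 1) * M * (M - 1)) := by
      rw [discrim]; ring
    rw [this]
    exact mul_nonpos_of_nonneg_of_nonpos (by positivity) (by linarith)
  calc x * log x ≤ x * (M + x / (β * a) - 1) := mul_log_le_mul_tangent hx (by positivity)
    _ ≤ β * M / (4 * a) * (x + a) ^ 2 := by
      rw [← sub_nonneg]
      have : β * M / (4 * a) * (x + a) ^ 2 - x * (M + x / (β * a) - 1) =
          ((β ^ 2 * M - 4) * (x * x) + 2 * a * β * (β * M - 2 * M + 2) * x
            + a ^ 2 * β ^ 2 * M) / (4 * a * β) := by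
        field_simp; ring
      rw [this]
      positivity

theorem nlogn_bound_general (γ : ℝ) (h0 : 0 < γ) (h1 : γ < 1 / Real.exp 1) (n : ℕ) :
    (n : ℝ) * Real.log n / ((n : ℝ) + 1 / γ) ^ 2 ≤
      ((1 + 2 / (Real.log (1 / γ) - 1)) / 4) * (γ * Real.log (1 / γ)) +
        ((1 + 2 / (Real.log (1 / γ) - 1)) *
            Real.log (1 + 2 / (Real.log (1 / γ) - 1)) / 4) * γ := by
  set L := log (1 / γ)
  set β := 1 + 2 / (L - 1)
  have hL : 1 < L := by
    rwa [lt_log_iff_exp_lt (by positivity), lt_one_div (exp_pos 1) h0]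
  have hβ_sub : (β - 1) * (L - 1) = 2 := by
    simp only [β, add_sub_cancel_left]
    exact div_mul_cancel₀ 2 (by linarith)
  have hβ : 1 < β := by nlinarith
  have hM : log (β * (1 / γ)) = L + log β := by rw [log_mul (by positivity) (by positivity), add_comm]
  have hlogβ : 0 ≤ log β := log_nonneg hβ.le
  have hdisc : 1 ≤ (β - 1) * (L + log β) * (L + log β - 1) :=
    calc 1 ≤ 2 * L := by linarith
      _ = (β - 1) * L * (L - 1) := by rw [mul_right_comm, hβ_sub]
      _ ≤ (β - 1) * (L + log β) * (L + log β - 1) := by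
        gcongr <;> linarith
  have key := mul_log_le_of_discrim (a := 1 / γ) (β := β) (one_div_pos.2 h0) (by positivity)
    (Nat.cast_nonneg n) (by rw [hM]; linarith) (by rwa [hM])
  rw [div_le_iff₀ (by positivity)]
  refine key.trans_eq ?_
  rw [hM]; field_simp

theorem nlogn_bound (γ : ℝ) (h0 : 0 < γ) (h1 : γ < 1 / Real.exp 1) (n : ℕ) (hn : 0 < n) :
    (n : ℝ) * Real.log n / ((n : ℝ) + 1 / γ) ^ 2 ≤
      ((1 + 2 / (Real.log (1 / γ) - 1)) / 4) * (γ * Real.log (1 / γ)) +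
        ((1 + 2 / (Real.log (1 / γ) - 1)) *
            Real.log (1 + 2 / (Real.log (1 / γ) - 1)) / 4) * γ :=
  nlogn_bound_general γ h0 h1 n
end

section
/- For any positive integer k, real γ with k ≤ 1/γ, and integer q with ⌈k/2⌉ ≤ q ≤ 2⌈k/2⌉: (1/(1+2γq))·(1 - (q - ⌈k/2⌉)/k) ≥ (1/(1+γk))·(1 - 2·(q - ⌈k/2⌉)/k - 1/k). -/
/-!
Write `d = q - ⌈k/2⌉ ≥ 0`. Multiplying out by `k`, the claim is
`(k - 2d - 1)(1 + 2γq) ≤ (k - d)(1 + γk)`. If `k - 2d - 1 ≤ 0` the left side is nonpositive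
and the right side nonnegative. Otherwise `2q ≤ k + 1 + 2d` gives
`2q(k - 2d - 1) ≤ k² - (2d + 1)²`, so the difference of the two sides is at least
`d + 1 + γ((2d + 1)² - kd) ≥ d + 1 - γkd ≥ 1`, using `γk ≤ 1`.
-/

section
variable {k m q γ : ℝ}

theorem sub_mul_one_add_le_of_two_mul_le_add_one (hk : 1 ≤ k) (hγ : 0 ≤ γ) (hγk : γ * k ≤ 1)
    (hmq : m ≤ q) (hqm : q ≤ 2 * m) (hmk : 2 * m ≤ k + 1) :
    (k - 2 * (q - m) - 1) * (1 + 2 * γ * q) ≤ (k - (q - m)) * (1 + γ * k) := by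
  have hd : 0 ≤ q - m := sub_nonneg.2 hmq
  have hq : 0 ≤ q := by linarith
  rcases le_total (k - 2 * (q - m) - 1) 0 with hneg | hpos
  · have : 0 ≤ (k - (q - m)) * (1 + γ * k) := by
      apply mul_nonneg <;> nlinarith
    nlinarith [mul_nonneg hγ hq]
  · nlinarith [mul_nonneg hγ hpos, mul_nonneg hγ hd, mul_nonneg hd (sub_nonneg.2 hγk),
      mul_nonneg (mul_nonneg hγ hpos) (by linarith : 0 ≤ k + 1 - 2 * m)]

theorem one_div_mul_le_of_two_mul_le_add_one (hk : 1 ≤ k) (hγ : 0 ≤ γ) (hγk : γ * k ≤ 1)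
    (hmq : m ≤ q) (hqm : q ≤ 2 * m) (hmk : 2 * m ≤ k + 1) :
    1 / (1 + γ * k) * (1 - 2 * (q - m) / k - 1 / k) ≤
      1 / (1 + 2 * γ * q) * (1 - (q - m) / k) := by
  have hk0 : 0 < k := by linarith
  have hq : 0 ≤ q := by linarith
  have hlhs : 1 - 2 * (q - m) / k - 1 / k = (k - 2 * (q - m) - 1) / k := by field_simp
  have hrhs : 1 - (q - m) / k = (k - (q - m)) / k := by field_simp
  rw [hlhs, hrhs, one_div_mul_eq_div, one_div_mul_eq_div,
    div_le_div_iff₀ (by positivity) (by positivity), div_mul_eq_mul_div, div_mul_eq_mul_div]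
  exact div_le_div_of_nonneg_right
    (sub_mul_one_add_le_of_two_mul_le_add_one hk hγ hγk hmq hqm hmk) hk0.le

end

theorem arithmetic_bound (k q : ℕ) (hk : 0 < k) (γ : ℝ) (hγ : 0 < γ)
    (hkγ : (k : ℝ) ≤ 1 / γ) (hq1 : (k + 1) / 2 ≤ q) (hq2 : q ≤ 2 * ((k + 1) / 2)) :
    (1 / (1 + 2 * γ * q)) * (1 - ((q : ℝ) - ((k + 1) / 2 : ℕ)) / k) ≥
      (1 / (1 + γ * k)) * (1 - 2 * ((q : ℝ) - ((k + 1) / 2 : ℕ)) / k - 1 / k) := by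
  have hγk : γ * k ≤ 1 := by rwa [le_div_iff₀ hγ, mul_comm] at hkγ
  have hmk : 2 * ((k + 1) / 2) ≤ k + 1 := Nat.mul_div_le (k + 1) 2
  exact one_div_mul_le_of_two_mul_le_add_one (by exact_mod_cast hk) hγ.le hγk
    (by exact_mod_cast hq1) (by exact_mod_cast hq2) (by exact_mod_cast hmk)
end
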